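/- arXiv:1009.4889 — 2 statements merged into one kernel-verified Lean document; each statement's English description precedes it below -/
import Mathlib

section
/- Let m, n be positive integers, let x(t), y(t) ∈ K[[t]] with leading terms a·t^α and b·t^β respectively (a, b ∈ K*) such that α : β = n : m, and let f = f_d + f_{d+1} + … be the (n,m)-weighted homogeneous decomposition of f ∈ K[[x,y]] with f_d ≠ 0. Then ord f(x(t), y(t)) ≥ dα/n, with equality if and only if f_d(a,b) ≠ 0. -/
open MvPowerSeries MeasureTheory
open scoped Classical ENNReal

noncomputable section

variable {K : Type*} [Field K]

/-- The formal power series ring `K[[x,y]]`. -/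
abbrev PS (K : Type*) [Field K] : Type _ := MvPowerSeries (Fin 2) K

/-- The point of `ℝ²` corresponding to an exponent. -/
def rpt (α : Fin 2 →₀ ℕ) : ℝ × ℝ := ((α 0 : ℝ), (α 1 : ℝ))

/-- The point of `ℝ²` corresponding to a pair of naturals. -/
def npt (p : ℕ × ℕ) : ℝ × ℝ := ((p.1 : ℝ), (p.2 : ℝ))

/-- The support of `f`, as a subset of `ℝ²`. -/
def suppR (f : PS K) : Set (ℝ × ℝ) := rpt '' {α | MvPowerSeries.coeff (R := K) α f ≠ 0}

/-- The Newton polyhedron `Γ₊(f)`: the convex hull of `⋃_{α ∈ supp f} (α + ℝ²₊)`. -/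
def NewtonPolyhedron (f : PS K) : Set (ℝ × ℝ) :=
  convexHull ℝ (⋃ p ∈ suppR f, {q : ℝ × ℝ | p.1 ≤ q.1 ∧ p.2 ≤ q.2})

/-- Scalar product on `ℝ²`. -/
def dotp (w q : ℝ × ℝ) : ℝ := w.1 * q.1 + w.2 * q.2

/-- A (compact) face of the Newton polyhedron: the locus where some linear functional with
strictly positive coefficients attains its minimum on `Γ₊(f)`. -/
def IsFace (f : PS K) (Δ : Set (ℝ × ℝ)) : Prop :=
  Δ.Nonempty ∧ ∃ w : ℝ × ℝ, 0 < w.1 ∧ 0 < w.2 ∧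
    Δ = {q ∈ NewtonPolyhedron f | ∀ p ∈ NewtonPolyhedron f, dotp w q ≤ dotp w p}

/-- The Newton diagram `Γ(f)`: the union of the compact faces of `Γ₊(f)`. -/
def NewtonDiagram (f : PS K) : Set (ℝ × ℝ) := {q | ∃ Δ, IsFace f Δ ∧ q ∈ Δ}

/-- An edge (1-dimensional face) of the Newton diagram. -/
def IsEdge (f : PS K) (Δ : Set (ℝ × ℝ)) : Prop :=
  IsFace f Δ ∧ ∃ P Q : ℝ × ℝ, P ≠ Q ∧ Δ = segment ℝ P Q

/-- A vertex (0-dimensional face) of the Newton diagram. -/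
def IsVertexOf (f : PS K) (q : ℝ × ℝ) : Prop := IsFace f {q}

/-- `f` is convenient if its Newton diagram meets both coordinate axes. -/
def Convenient (f : PS K) : Prop :=
  (∃ p ∈ NewtonDiagram f, p.2 = 0) ∧ (∃ p ∈ NewtonDiagram f, p.1 = 0)

/-- `Γ₋(f)`: the union of all segments joining the origin to points of `Γ(f)`. -/
def GammaMinus (f : PS K) : Set (ℝ × ℝ) := ⋃ q ∈ NewtonDiagram f, segment ℝ (0, 0) q

/-- The region `ℝ²_{≥1}`. -/
def Rge1 : Set (ℝ × ℝ) := {p | 1 ≤ p.1 ∧ 1 ≤ p.2}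

/-- `Γ₁(f)`: the cone joining the origin with `Γ(f) ∩ ℝ²_{≥1}`. -/
def Gamma1 (f : PS K) : Set (ℝ × ℝ) := ⋃ q ∈ NewtonDiagram f ∩ Rge1, segment ℝ (0, 0) q

/-- Two-dimensional Euclidean volume (area). -/
def V2 (Q : Set (ℝ × ℝ)) : ℝ := (volume Q).toReal

/-- Sum of the one-dimensional volumes of the intersections with the coordinate axes. -/
def V1 (Q : Set (ℝ × ℝ)) : ℝ :=
  (volume {x : ℝ | (x, 0) ∈ Q}).toReal + (volume {y : ℝ | (0, y) ∈ Q}).toReal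

/-- The Newton number of a convenient power series `f ∈ m`:
`μ_N(f) = 2 V₂(Γ₋(f)) - V₁(Γ₋(f)) + 1` (the last term being `V₀`). -/
def muN (f : PS K) : ℝ := 2 * V2 (GammaMinus f) - V1 (GammaMinus f) + 1

/-- `f + x^m + y^m`. -/
def fplus (f : PS K) (m : ℕ) : PS K :=
  f + (MvPowerSeries.X 0) ^ m + (MvPowerSeries.X 1) ^ m

/-- The Newton number of an arbitrary `f ∈ m`, as the sup of `μ_N(f + x^m + y^m)`, `m ≥ 1`. -/
def muNE (f : PS K) : ℝ≥0∞ := ⨆ m : ℕ, ENNReal.ofReal (muN (fplus f (m + 1)))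

/-- Formal partial derivative of a power series in two variables. -/
def pd (i : Fin 2) (f : PS K) : PS K :=
  fun α => ((α i + 1 : ℕ) : K) * MvPowerSeries.coeff (R := K) (α + Finsupp.single i 1) f

/-- The Jacobian ideal `j(f)`. -/
def jacobianIdeal (f : PS K) : Ideal (PS K) := Ideal.span {pd 0 f, pd 1 f}

/-- The Milnor number `μ(f) = dim_K K[[x,y]]/j(f)`, as an extended real. -/
def milnor (f : PS K) : ℝ≥0∞ :=
  ((Cardinal.toENat (Module.rank K (PS K ⧸ jacobianIdeal f)) : ℕ∞) : ℝ≥0∞)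

/-- Evaluation of a power series with finitely many terms at a point `(a,b)`. -/
def evalAt (f : PS K) (a b : K) : K :=
  ∑ᶠ α : Fin 2 →₀ ℕ, MvPowerSeries.coeff (R := K) α f * a ^ (α 0) * b ^ (α 1)

/-- The initial form `f_Δ` of `f` along a subset `Δ ⊆ ℝ²`. -/
def inFace (f : PS K) (Δ : Set (ℝ × ℝ)) : PS K :=
  fun α => if rpt α ∈ Δ then MvPowerSeries.coeff (R := K) α f else 0

/-- The initial part `f_in` of `f`: the sum of the terms supported on `Γ(f)`. -/
def initialPart (f : PS K) : PS K := inFace f (NewtonDiagram f)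

/-- `f` is degenerate along `Δ` if the Jacobian ideal of `f_Δ` has a zero in the torus. -/
def DegenerateAlong (f : PS K) (Δ : Set (ℝ × ℝ)) : Prop :=
  ∃ a b : K, a ≠ 0 ∧ b ≠ 0 ∧
    evalAt (pd 0 (inFace f Δ)) a b = 0 ∧ evalAt (pd 1 (inFace f Δ)) a b = 0

/-- Newton non-degenerate: non-degenerate along every face of the Newton diagram. -/
def NND (f : PS K) : Prop := ∀ Δ, IsFace f Δ → ¬DegenerateAlong f Δ

/-- `f` is weakly degenerate along `Δ` if the Tjurina ideal of `f_Δ` has a zero in the torus. -/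
def WeaklyDegenerateAlong (f : PS K) (Δ : Set (ℝ × ℝ)) : Prop :=
  ∃ a b : K, a ≠ 0 ∧ b ≠ 0 ∧ evalAt (inFace f Δ) a b = 0 ∧
    evalAt (pd 0 (inFace f Δ)) a b = 0 ∧ evalAt (pd 1 (inFace f Δ)) a b = 0

/-- Weakly Newton non-degenerate: weakly non-degenerate along each edge of `Γ(f)`. -/
def WNND (f : PS K) : Prop := ∀ Δ, IsEdge f Δ → ¬WeaklyDegenerateAlong f Δ

/-- The `(n,m)`-weighted homogeneous component of `f` of weighted degree `l`. -/
def wtComp (n m l : ℕ) (f : PS K) : PS K :=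
  fun α => if n * α 0 + m * α 1 = l then MvPowerSeries.coeff (R := K) α f else 0

/-- The binomial `a x^m - b y^n`. -/
def binomPS (a b : K) (m n : ℕ) : PS K :=
  MvPowerSeries.C (σ := Fin 2) (R := K) a * (MvPowerSeries.X 0) ^ m -
    MvPowerSeries.C (σ := Fin 2) (R := K) b * (MvPowerSeries.X 1) ^ n

/-- Weighted homogeneous Newton non-degenerate: there are no `a, b ∈ K*` and coprime positive
`m, n` such that the first term of the `(n,m)`-weighted homogeneous decomposition of `f`
is divisible by `(a x^m - b y^n)²` and the second term is divisible by `(a x^m - b y^n)`. -/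
def WHNND (f : PS K) : Prop :=
  ¬∃ (a b : K) (m n d : ℕ), a ≠ 0 ∧ b ≠ 0 ∧ 0 < m ∧ 0 < n ∧ Nat.Coprime m n ∧
    wtComp n m d f ≠ 0 ∧ (∀ l < d, wtComp n m l f = 0) ∧
    binomPS a b m n ^ 2 ∣ wtComp n m d f ∧ binomPS a b m n ∣ wtComp n m (d + 1) f

/-- The region on or above `P` (along rays from the origin). -/
def Above (P : Set (ℝ × ℝ)) : Set (ℝ × ℝ) := {q | ∃ p ∈ P, ∃ t : ℝ, 1 ≤ t ∧ q = t • p}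

/-- A C-polytope: a compact rational polytope of dimension 1 in the positive quadrant such that
the region above it is convex and every ray from the origin in the positive quadrant meets it
in exactly one point. -/
def CPolytope (P : Set (ℝ × ℝ)) : Prop :=
  IsCompact P ∧ P ⊆ {q | 0 ≤ q.1 ∧ 0 ≤ q.2} ∧ Convex ℝ (Above P) ∧
  (∃ S : Finset ((ℚ × ℚ) × (ℚ × ℚ)),
    P = ⋃ e ∈ S, segment ℝ (((e.1.1 : ℝ), (e.1.2 : ℝ))) (((e.2.1 : ℝ), (e.2.2 : ℝ)))) ∧
  ∀ q : ℝ × ℝ, 0 ≤ q.1 → 0 ≤ q.2 → q ≠ 0 → ∃! t : ℝ, 0 < t ∧ t • q ∈ P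

/-- An inner face of a C-polytope: a compact face not contained in a coordinate hyperplane. -/
def IsInnerFaceOf (P Δ : Set (ℝ × ℝ)) : Prop :=
  Δ.Nonempty ∧
  (∃ w : ℝ × ℝ, 0 < w.1 ∧ 0 < w.2 ∧ Δ = {q ∈ Above P | ∀ p ∈ Above P, dotp w q ≤ dotp w p}) ∧
  ∃ q ∈ Δ, q.1 ≠ 0 ∧ q.2 ≠ 0

/-- Inner non-degenerate along `Δ`: for each zero `q = (a,b)` of `j(in_Δ f)`, the face `Δ`
contains no point of the coordinate subspace `H_q` determined by the vanishing coordinates. -/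
def INDalong (f : PS K) (Δ : Set (ℝ × ℝ)) : Prop :=
  ∀ a b : K, evalAt (pd 0 (inFace f Δ)) a b = 0 → evalAt (pd 1 (inFace f Δ)) a b = 0 →
    ∀ q ∈ Δ, ¬((a = 0 → q.1 = 0) ∧ (b = 0 → q.2 = 0))

/-- Inner Newton non-degenerate with respect to a C-polytope `P`. -/
def INNDwrt (f : PS K) (P : Set (ℝ × ℝ)) : Prop :=
  CPolytope P ∧ (∀ p ∈ suppR f, p ∈ Above P) ∧ ∀ Δ, IsInnerFaceOf P Δ → INDalong f Δ

/-- Inner Newton non-degenerate. -/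
def INND (f : PS K) : Prop := ∃ P, INNDwrt f P

/-- The condition ND1 along the vertex `(0,n)` on the `y`-axis. -/
def ND1y (f : PS K) (n : ℕ) : Prop :=
  ringChar K = 0 ∨ ¬(ringChar K ∣ n) ∨
    ∃ j1 : ℕ, ((1 : ℝ), (j1 : ℝ)) ∈ NewtonDiagram f ∧
      MvPowerSeries.coeff (R := K) (Finsupp.single 0 1 + Finsupp.single 1 j1) f ≠ 0

/-- The condition ND1 along the vertex `(m,0)` on the `x`-axis. -/
def ND1x (f : PS K) (m : ℕ) : Prop :=
  ringChar K = 0 ∨ ¬(ringChar K ∣ m) ∨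
    ∃ i1 : ℕ, ((i1 : ℝ), (1 : ℝ)) ∈ NewtonDiagram f ∧
      MvPowerSeries.coeff (R := K) (Finsupp.single 0 i1 + Finsupp.single 1 1) f ≠ 0

/-- NND1: convenient, non-degenerate along each inner face, and ND1 along the two vertices
of the Newton diagram on the axes. -/
def NND1 (f : PS K) : Prop :=
  Convenient f ∧
  (∀ Δ, IsFace f Δ → (∃ q ∈ Δ, q.1 ≠ 0 ∧ q.2 ≠ 0) → ¬DegenerateAlong f Δ) ∧
  (∀ n : ℕ, IsVertexOf f ((0 : ℝ), (n : ℝ)) → ND1y f n) ∧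
  (∀ m : ℕ, IsVertexOf f ((m : ℝ), (0 : ℝ)) → ND1x f m)

/-- Substitution `f(x(t), y(t))` of two one-variable power series without constant term into a
two-variable power series. -/
def substPS (f : PS K) (x y : PowerSeries K) : PowerSeries K :=
  PowerSeries.mk fun N => ∑ᶠ α : Fin 2 →₀ ℕ,
    MvPowerSeries.coeff (R := K) α f * PowerSeries.coeff (R := K) N (x ^ (α 0) * y ^ (α 1))

/-- Composition `x(h(t))` of one-variable power series (`h` without constant term). -/
def compPS (x h : PowerSeries K) : PowerSeries K :=
  PowerSeries.mk fun N => ∑ᶠ k : ℕ, PowerSeries.coeff (R := K) k x * PowerSeries.coeff (R := K) N (h ^ k)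

/-- A (primitive) parametrization of `f`. -/
def IsParam (f : PS K) (x y : PowerSeries K) : Prop :=
  PowerSeries.constantCoeff (R := K) x = 0 ∧ PowerSeries.constantCoeff (R := K) y = 0 ∧
  substPS f x y = 0 ∧
  ∀ u v : PowerSeries K, PowerSeries.constantCoeff (R := K) u = 0 →
    PowerSeries.constantCoeff (R := K) v = 0 → substPS f u v = 0 →
      ∃! h : PowerSeries K, PowerSeries.constantCoeff (R := K) h = 0 ∧
        u = compPS x h ∧ v = compPS y h

/-- `x(t)` has leading term `a t^α`. -/
def HasLeadTerm (x : PowerSeries K) (a : K) (α : ℕ) : Prop :=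
  a ≠ 0 ∧ PowerSeries.coeff (R := K) α x = a ∧ ∀ i < α, PowerSeries.coeff (R := K) i x = 0

/-- The number of lattice points of a subset of `ℝ²`. -/
def latticeCount (S : Set (ℝ × ℝ)) : ℕ :=
  Nat.card ↥(S ∩ {p : ℝ × ℝ | ∃ i j : ℕ, p = ((i : ℝ), (j : ℝ))})

/-- A factorization of `f` into irreducible factors (counted with multiplicity). -/
def IsFactorization (f : PS K) (s : Multiset (PS K)) : Prop :=
  (∀ g ∈ s, Irreducible g) ∧ Associated s.prod f

/-- The class of a monomial in `Associates`. -/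
def IsMonomialClass (g : Associates (PS K)) : Prop :=
  ∃ i j : ℕ, g = Associates.mk ((MvPowerSeries.X 0 : PS K) ^ i * (MvPowerSeries.X 1) ^ j)

/-- `Σ_i s(f_{E_i})`: the number of non-monomial irreducible factors, up to associates, of the
initial forms of `f` along the edges of its Newton diagram. -/
def sEdges (f : PS K) : ℕ :=
  Nat.card ↥{g : Associates (PS K) | Irreducible g ∧ ¬IsMonomialClass g ∧
    ∃ Δ, IsEdge f Δ ∧ g ∣ Associates.mk (inFace f Δ)}

/-!
Write `x = t^α u` and `y = t^β v` with `u(0) = a`, `v(0) = b`. Then `x^i y^j` has leading term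
`a^i b^j t^(iα + jβ)`, and `α : β = n : m` gives `n (iα + jβ) = α (n i + m j)`: a monomial of
weighted degree `l` only contributes to `f(x(t), y(t))` in `t`-degrees `≥ lα/n`, and in degree
`lα/n` it contributes `a^i b^j`. So all coefficients below `dα/n` vanish and the one at `dα/n`
is `f_d(a, b)`.
-/

theorem hasLeadTerm_X_pow_mul {u : PowerSeries K} (hu : PowerSeries.constantCoeff u ≠ 0)
    (k : ℕ) : HasLeadTerm (PowerSeries.X ^ k * u) (PowerSeries.constantCoeff u) k :=
  ⟨hu, by simp [PowerSeries.coeff_X_pow_mul'],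
    fun i hi => by simp [PowerSeries.coeff_X_pow_mul', hi.not_ge]⟩

namespace HasLeadTerm

variable {x y : PowerSeries K} {a b : K} {α β : ℕ}

theorem exists_eq_X_pow_mul (hx : HasLeadTerm x a α) :
    ∃ u, PowerSeries.constantCoeff u = a ∧ x = PowerSeries.X ^ α * u := by
  obtain ⟨u, rfl⟩ := PowerSeries.X_pow_dvd_iff.mpr hx.2.2
  refine ⟨u, ?_, rfl⟩
  simpa [PowerSeries.coeff_X_pow_mul'] using hx.2.1

theorem mul (hx : HasLeadTerm x a α) (hy : HasLeadTerm y b β) :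
    HasLeadTerm (x * y) (a * b) (α + β) := by
  obtain ⟨u, rfl, rfl⟩ := hx.exists_eq_X_pow_mul
  obtain ⟨v, rfl, rfl⟩ := hy.exists_eq_X_pow_mul
  have h := hasLeadTerm_X_pow_mul (u := u * v) (by simpa using mul_ne_zero hx.1 hy.1) (α + β)
  rw [map_mul] at h
  convert h using 1
  ring

theorem pow (hx : HasLeadTerm x a α) : ∀ i : ℕ, HasLeadTerm (x ^ i) (a ^ i) (i * α)
  | 0 => by simpa using ⟨one_ne_zero, by simp, by simp⟩
  | i + 1 => by simpa [pow_succ, add_mul] using (hx.pow i).mul hx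

end HasLeadTerm

theorem coeff_wtComp (n m l : ℕ) (f : PS K) (γ : Fin 2 →₀ ℕ) :
    MvPowerSeries.coeff γ (wtComp n m l f) =
      if n * γ 0 + m * γ 1 = l then MvPowerSeries.coeff γ f else 0 :=
  rfl

theorem coeff_eq_zero_of_wtComp_eq_zero {f : PS K} {n m d : ℕ}
    (hlow : ∀ l < d, wtComp n m l f = 0) {γ : Fin 2 →₀ ℕ} (hγ : n * γ 0 + m * γ 1 < d) :
    MvPowerSeries.coeff γ f = 0 := by
  simpa [coeff_wtComp] using congr(MvPowerSeries.coeff γ $(hlow _ hγ))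

theorem mul_weight_eq {n m α β : ℕ} (hratio : α * m = β * n) (i j : ℕ) :
    n * (i * α + j * β) = α * (n * i + m * j) :=
  calc n * (i * α + j * β) = n * i * α + j * (β * n) := by ring
    _ = α * (n * i + m * j) := by rw [← hratio]; ring

section Substitution

variable {f : PS K} {x y : PowerSeries K} {a b : K} {α β n m d N : ℕ}

theorem coeff_pow_mul_pow_of_lt (hx : HasLeadTerm x a α) (hy : HasLeadTerm y b β)
    (hratio : α * m = β * n) {i j : ℕ} (hN : n * N < α * (n * i + m * j)) :
    PowerSeries.coeff N (x ^ i * y ^ j) = 0 :=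
  ((hx.pow i).mul (hy.pow j)).2.2 N
    (Nat.lt_of_mul_lt_mul_left (by rwa [mul_weight_eq hratio]))

theorem coeff_pow_mul_pow_of_eq (hn : 0 < n) (hx : HasLeadTerm x a α) (hy : HasLeadTerm y b β)
    (hratio : α * m = β * n) {i j : ℕ} (hN : n * N = α * (n * i + m * j)) :
    PowerSeries.coeff N (x ^ i * y ^ j) = a ^ i * b ^ j := by
  obtain rfl : N = i * α + j * β :=
    Nat.eq_of_mul_eq_mul_left hn (by rw [hN, mul_weight_eq hratio])
  exact ((hx.pow i).mul (hy.pow j)).2.1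

theorem coeff_substPS_of_lt (hx : HasLeadTerm x a α) (hy : HasLeadTerm y b β)
    (hratio : α * m = β * n) (hlow : ∀ l < d, wtComp n m l f = 0) (hN : n * N < d * α) :
    PowerSeries.coeff N (substPS f x y) = 0 := by
  rw [substPS, PowerSeries.coeff_mk]
  refine finsum_eq_zero_of_forall_eq_zero fun γ => ?_
  rcases lt_or_ge (n * γ 0 + m * γ 1) d with hγ | hγ
  · rw [coeff_eq_zero_of_wtComp_eq_zero hlow hγ, zero_mul]
  · rw [coeff_pow_mul_pow_of_lt hx hy hratio (by nlinarith), mul_zero]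

theorem coeff_substPS_of_eq (hn : 0 < n) (hα : 0 < α) (hx : HasLeadTerm x a α)
    (hy : HasLeadTerm y b β) (hratio : α * m = β * n) (hlow : ∀ l < d, wtComp n m l f = 0)
    (hN : n * N = d * α) :
    PowerSeries.coeff N (substPS f x y) = evalAt (wtComp n m d f) a b := by
  rw [substPS, PowerSeries.coeff_mk, evalAt]
  refine finsum_congr fun γ => ?_
  rw [coeff_wtComp]
  rcases lt_trichotomy (n * γ 0 + m * γ 1) d with hγ | hγ | hγ
  · simp [coeff_eq_zero_of_wtComp_eq_zero hlow hγ]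
  · rw [if_pos hγ, coeff_pow_mul_pow_of_eq hn hx hy hratio (by rw [hN, hγ, mul_comm]), mul_assoc]
  · rw [if_neg hγ.ne', coeff_pow_mul_pow_of_lt hx hy hratio
      (by rw [hN, mul_comm]; exact Nat.mul_lt_mul_of_pos_left hγ hα)]
    simp

theorem exists_weight_eq_of_evalAt_ne_zero (h : evalAt (wtComp n m d f) a b ≠ 0) :
    ∃ γ : Fin 2 →₀ ℕ, n * γ 0 + m * γ 1 = d := by
  by_contra! hγ
  exact h (finsum_eq_zero_of_forall_eq_zero fun γ => by simp [coeff_wtComp, hγ γ])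

end Substitution

section Order

variable {R : Type*} [Semiring R] {φ : PowerSeries R} {n c : ℕ}

theorem le_mul_order (hn : n ≠ 0) (h : ∀ N, n * N < c → PowerSeries.coeff N φ = 0) :
    (c : ℕ∞) ≤ n * φ.order := by
  rcases eq_or_ne φ 0 with rfl | hφ
  · simp [ENat.mul_top, hn]
  · rw [← PowerSeries.coe_toNat_order hφ]
    norm_cast
    by_contra! hlt
    exact PowerSeries.coeff_order hφ (h _ hlt)

theorem mul_order_eq_iff (hn : n ≠ 0) (h : ∀ N, n * N < c → PowerSeries.coeff N φ = 0) :
    (n : ℕ∞) * φ.order = c ↔ ∃ N, n * N = c ∧ PowerSeries.coeff N φ ≠ 0 := by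
  constructor
  · intro hc
    have hφ : φ ≠ 0 := by
      rintro rfl
      simp [ENat.mul_top, hn] at hc
    refine ⟨φ.order.toNat, ?_, PowerSeries.coeff_order hφ⟩
    rw [← PowerSeries.coe_toNat_order hφ] at hc
    exact_mod_cast hc
  · rintro ⟨N, rfl, hN⟩
    rw [PowerSeries.order_eq_nat.mpr
      ⟨hN, fun i hi => h i (Nat.mul_lt_mul_of_pos_left hi (Nat.pos_of_ne_zero hn))⟩]
    norm_cast

end Order

theorem stmt3_general (f : PS K) (n m : ℕ) (hn : 0 < n)
    (x y : PowerSeries K) (a b : K) (α β : ℕ) (hα : 0 < α)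
    (hx : HasLeadTerm x a α) (hy : HasLeadTerm y b β) (hratio : α * m = β * n)
    (d : ℕ) (hlow : ∀ l < d, wtComp n m l f = 0) :
    ((d * α : ℕ) : ℕ∞) ≤ (n : ℕ∞) * PowerSeries.order (substPS f x y) ∧
      ((n : ℕ∞) * PowerSeries.order (substPS f x y) = ((d * α : ℕ) : ℕ∞) ↔
        evalAt (wtComp n m d f) a b ≠ 0) := by
  have hzero : ∀ N, n * N < d * α → PowerSeries.coeff N (substPS f x y) = 0 :=
    fun _ => coeff_substPS_of_lt hx hy hratio hlow
  have hcoeff {N : ℕ} : n * N = d * α →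
      PowerSeries.coeff N (substPS f x y) = evalAt (wtComp n m d f) a b :=
    coeff_substPS_of_eq hn hα hx hy hratio hlow
  refine ⟨le_mul_order hn.ne' hzero, (mul_order_eq_iff hn.ne' hzero).trans ⟨?_, fun h => ?_⟩⟩
  · rintro ⟨N, hN, hc⟩
    rwa [hcoeff hN] at hc
  · obtain ⟨γ, hγ⟩ := exists_weight_eq_of_evalAt_ne_zero h
    have hN : n * (γ 0 * α + γ 1 * β) = d * α := by rw [mul_weight_eq hratio, hγ, mul_comm]
    exact ⟨_, hN, by rwa [hcoeff hN]⟩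

/-- Lemma 2.7: if `x(t), y(t)` have leading terms `a t^α`, `b t^β` with `α : β = n : m`, then
`ord f(x(t), y(t)) ≥ d α / n`, with equality iff `f_d(a,b) ≠ 0` (where `f_d` is the first term
of the `(n,m)`-weighted homogeneous decomposition of `f`). -/
theorem stmt3 (f : PS K) (n m : ℕ) (hn : 0 < n) (hm : 0 < m)
    (x y : PowerSeries K) (a b : K) (α β : ℕ) (hα : 0 < α) (hβ : 0 < β)
    (hx : HasLeadTerm x a α) (hy : HasLeadTerm y b β) (hratio : α * m = β * n)
    (d : ℕ) (hd : wtComp n m d f ≠ 0) (hlow : ∀ l < d, wtComp n m l f = 0) :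
    ((d * α : ℕ) : ℕ∞) ≤ (n : ℕ∞) * PowerSeries.order (substPS f x y) ∧
      ((n : ℕ∞) * PowerSeries.order (substPS f x y) = ((d * α : ℕ) : ℕ∞) ↔
        evalAt (wtComp n m d f) a b ≠ 0) :=
  stmt3_general f n m hn x y a b α β hα hx hy hratio d hlow
end
end

section
/- Let E be an edge of the Newton diagram of f ∈ K[[x,y]], and write f_E = (monomial) · ∏_{i=1}^s (a_i x^{m_0} − b_i y^{n_0})^{r_i} with a_i, b_i ∈ K*, (a_i : b_i) pairwise distinct, gcd(m_0, n_0) = 1. Then f is weakly non-degenerate (WND) along E if and only if r_i = 1 for all i, equivalently s(f_E) = l(E). In particular, WNND implies WHNND. -/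
open MvPowerSeries MeasureTheory
open scoped Classical ENNReal

noncomputable section

variable {K : Type*} [Field K]

/-!
A torus zero of `f_E` is a zero of some binomial factor `a_i x^{m₀} - b_i y^{n₀}`, and of no other
one since the ratios `(a_i : b_i)` are distinct. If that factor is repeated, the zero is singular.
If it is simple, the zero is singular only if the binomial itself is singular there, which forces
`m₀ = n₀ = 0` in `K`, impossible for coprime `m₀, n₀`.

For WNND ⇒ WHNND: if the lowest `(n, m)`-weighted component `f_d` of `f` is divisible by
`(a x^m - b y^n)²`, it is a polynomial `(a x^m - b y^n)² H` and the initial form of `f` along the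
face of `Γ₊(f)` supported by the weight `(n, m)`. That face is an edge because `f_d` vanishes at a
torus point and so is not a monomial, and `f` is weakly degenerate along it.
-/

namespace MvPolynomial

variable {σ R : Type*} [CommRing R]

def IsSingularPoint (F : MvPolynomial σ R) (x : σ → R) : Prop :=
  eval x F = 0 ∧ ∀ i, eval x (pderiv i F) = 0

theorem isSingularPoint_of_sq_dvd {p F : MvPolynomial σ R} (hpF : p ^ 2 ∣ F) {x : σ → R}
    (hp : eval x p = 0) : IsSingularPoint F x := by
  obtain ⟨G, rfl⟩ := hpF
  exact ⟨by simp [hp], fun i => by simp [hp]⟩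

variable [IsDomain R]

theorem IsSingularPoint.of_mul {p G : MvPolynomial σ R} {x : σ → R}
    (h : IsSingularPoint (p * G) x) (hp : eval x p = 0) (hG : eval x G ≠ 0) :
    IsSingularPoint p x := by
  refine ⟨hp, fun i => ?_⟩
  have := h.2 i
  simp only [pderiv_mul, map_add, map_mul, hp, zero_mul, add_zero] at this
  exact (mul_eq_zero.mp this).resolve_right hG

theorem exists_ne_mem_support_of_eval_eq_zero {P : MvPolynomial σ R} (hP : P ≠ 0) {x : σ → R}
    (hx : ∀ i, x i ≠ 0) (h : eval x P = 0) : ∃ α ∈ P.support, ∃ β ∈ P.support, α ≠ β := by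
  obtain ⟨α, hα⟩ := support_nonempty.2 hP
  by_contra! hsingle
  have hmono : P = monomial α (coeff α P) := by
    conv_lhs => rw [P.as_sum, Finset.sum_eq_single_of_mem α hα fun β hβ hβα => absurd
      (hsingle β hβ α hα) hβα]
  rw [hmono, eval_monomial] at h
  exact mul_ne_zero (mem_support_iff.1 hα)
    (Finsupp.prod_ne_zero_iff.2 fun i _ => pow_ne_zero _ (hx i)) h

end MvPolynomial

open MvPolynomial in
def HasTorusSingularPoint (F : MvPolynomial (Fin 2) K) : Prop :=
  ∃ x y : K, x ≠ 0 ∧ y ≠ 0 ∧ IsSingularPoint F ![x, y]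

theorem pd_coe (i : Fin 2) (p : MvPolynomial (Fin 2) K) :
    pd i (p : PS K) = ↑(MvPolynomial.pderiv i p) := by
  ext α
  change ((α i + 1 : ℕ) : K) * MvPowerSeries.coeff _ (p : PS K) = _
  rw [MvPolynomial.coeff_coe, MvPolynomial.coeff_coe, MvPolynomial.coeff_pderiv]
  push_cast
  ring

theorem evalAt_coe (p : MvPolynomial (Fin 2) K) (x y : K) :
    evalAt (p : PS K) x y = MvPolynomial.eval ![x, y] p := by
  rw [evalAt, MvPolynomial.eval_eq', finsum_eq_sum_of_support_subset (s := p.support)]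
  · simp [Fin.prod_univ_two, mul_assoc]
  · intro α hα
    simp only [Function.mem_support, MvPolynomial.coeff_coe] at hα
    simpa using left_ne_zero_of_mul (left_ne_zero_of_mul hα)

theorem weaklyDegenerateAlong_iff {f : PS K} {Δ : Set (ℝ × ℝ)} {F : MvPolynomial (Fin 2) K}
    (h : inFace f Δ = F) : WeaklyDegenerateAlong f Δ ↔ HasTorusSingularPoint F := by
  simp only [WeaklyDegenerateAlong, HasTorusSingularPoint, MvPolynomial.IsSingularPoint,
    Fin.forall_fin_two, h, pd_coe, evalAt_coe]

section Binomial

open MvPolynomial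

def binomPoly (a b : K) (m n : ℕ) : MvPolynomial (Fin 2) K :=
  MvPolynomial.C a * MvPolynomial.X 0 ^ m - MvPolynomial.C b * MvPolynomial.X 1 ^ n

theorem coe_binomPoly (a b : K) (m n : ℕ) : (binomPoly a b m n : PS K) = binomPS a b m n := by
  rw [← coeToMvPowerSeries.ringHom_apply, binomPoly, map_sub]
  simp [binomPS]

theorem eval_binomPoly (a b x y : K) (m n : ℕ) :
    eval ![x, y] (binomPoly a b m n) = a * x ^ m - b * y ^ n := by
  simp [binomPoly]

theorem exists_eval_binomPoly_eq_zero {a b : K} (ha : a ≠ 0) (hb : b ≠ 0) {m n : ℕ}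
    (hmn : m.Coprime n) : ∃ x y : K, x ≠ 0 ∧ y ≠ 0 ∧ eval ![x, y] (binomPoly a b m n) = 0 := by
  have hc : b / a ≠ 0 := div_ne_zero hb ha
  have hbez : m.gcdA n * m = 1 + -m.gcdB n * n := by
    have := Nat.gcd_eq_gcd_ab m n
    rw [hmn] at this
    push_cast at this
    linarith
  refine ⟨(b / a) ^ m.gcdA n, (b / a) ^ (-m.gcdB n), zpow_ne_zero _ hc, zpow_ne_zero _ hc, ?_⟩
  rw [eval_binomPoly, ← zpow_natCast, ← zpow_natCast, ← zpow_mul, ← zpow_mul, hbez,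
    zpow_add₀ hc, zpow_one]
  field_simp
  ring

theorem not_isSingularPoint_binomPoly {a b : K} (ha : a ≠ 0) (hb : b ≠ 0) {m n : ℕ}
    (hmn : m.Coprime n) {x y : K} (hx : x ≠ 0) (hy : y ≠ 0) :
    ¬IsSingularPoint (binomPoly a b m n) ![x, y] := by
  rintro ⟨-, hd⟩
  have hm : (m : K) = 0 := by simpa [binomPoly, ha, hx] using hd 0
  have hn : (n : K) = 0 := by simpa [binomPoly, hb, hy] using hd 1
  have := congrArg (Int.cast : ℤ → K) (Nat.gcd_eq_gcd_ab m n)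
  rw [hmn] at this
  push_cast at this
  simp [hm, hn] at this

theorem mul_eq_mul_of_eval_binomPoly_eq_zero {a b a' b' x y : K} {m n : ℕ} (hx : x ≠ 0)
    (h : eval ![x, y] (binomPoly a b m n) = 0) (h' : eval ![x, y] (binomPoly a' b' m n) = 0) :
    a * b' = a' * b := by
  rw [eval_binomPoly] at h h'
  have : (a * b' - a' * b) * x ^ m = 0 := by linear_combination b' * h - b * h'
  exact sub_eq_zero.mp ((mul_eq_zero.mp this).resolve_right (pow_ne_zero m hx))

theorem hasTorusSingularPoint_of_binomPoly_sq_dvd {F : MvPolynomial (Fin 2) K} {a b : K}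
    (ha : a ≠ 0) (hb : b ≠ 0) {m n : ℕ} (hmn : m.Coprime n) (h : binomPoly a b m n ^ 2 ∣ F) :
    HasTorusSingularPoint F := by
  obtain ⟨x, y, hx, hy, h0⟩ := exists_eval_binomPoly_eq_zero ha hb hmn
  exact ⟨x, y, hx, hy, isSingularPoint_of_sq_dvd h h0⟩

end Binomial

section EdgeForm

open MvPolynomial

def edgeForm {ι : Type*} [Fintype ι] (c : K) (u v : ℕ) (a b : ι → K) (m n : ℕ) (r : ι → ℕ) :
    MvPolynomial (Fin 2) K :=
  MvPolynomial.C c * MvPolynomial.X 0 ^ u * MvPolynomial.X 1 ^ v *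
    ∏ i, binomPoly (a i) (b i) m n ^ r i

variable {ι : Type*} [Fintype ι] {c : K} {u v : ℕ} {a b : ι → K} {m n : ℕ} {r : ι → ℕ}

theorem coe_edgeForm : (edgeForm c u v a b m n r : PS K) =
    MvPowerSeries.C c * MvPowerSeries.X 0 ^ u * MvPowerSeries.X 1 ^ v *
      ∏ i, binomPS (a i) (b i) m n ^ r i := by
  rw [← coeToMvPowerSeries.ringHom_apply, edgeForm]
  simp only [map_mul, map_pow, map_prod, coeToMvPowerSeries.ringHom_apply,
    MvPolynomial.coe_C, MvPolynomial.coe_X, coe_binomPoly]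

variable (hmn : m.Coprime n) (ha : ∀ i, a i ≠ 0) (hb : ∀ i, b i ≠ 0)
include hmn ha hb

theorem hasTorusSingularPoint_edgeForm_of_two_le {i : ι} (hi : 2 ≤ r i) :
    HasTorusSingularPoint (edgeForm c u v a b m n r) := by
  refine hasTorusSingularPoint_of_binomPoly_sq_dvd (ha i) (hb i) hmn ((pow_dvd_pow _ hi).trans ?_)
  exact (Finset.dvd_prod_of_mem (fun i => binomPoly (a i) (b i) m n ^ r i)
    (Finset.mem_univ i)).trans (dvd_mul_left _ _)

theorem not_hasTorusSingularPoint_edgeForm (hc : c ≠ 0)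
    (hdist : ∀ i j, i ≠ j → a i * b j ≠ a j * b i) (hr : ∀ i, r i = 1) :
    ¬HasTorusSingularPoint (edgeForm c u v a b m n r) := by
  rintro ⟨x, y, hx, hy, hsing⟩
  simp only [edgeForm, hr, pow_one] at hsing
  set M : MvPolynomial (Fin 2) K := MvPolynomial.C c * MvPolynomial.X 0 ^ u * MvPolynomial.X 1 ^ v
  have hM : eval ![x, y] M ≠ 0 := by simp [M, hc, hx, hy]
  obtain ⟨i, -, hi⟩ : ∃ i ∈ Finset.univ, eval ![x, y] (binomPoly (a i) (b i) m n) = 0 := by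
    have := hsing.1
    rw [map_mul, map_prod] at this
    exact Finset.prod_eq_zero_iff.mp ((mul_eq_zero.mp this).resolve_left hM)
  have hrest : eval ![x, y] (M * ∏ j ∈ Finset.univ.erase i, binomPoly (a j) (b j) m n) ≠ 0 := by
    rw [map_mul, map_prod]
    exact mul_ne_zero hM (Finset.prod_ne_zero_iff.mpr fun j hj hj0 =>
      hdist j i (Finset.ne_of_mem_erase hj) (mul_eq_mul_of_eval_binomPoly_eq_zero hx hj0 hi))
  rw [← Finset.mul_prod_erase _ _ (Finset.mem_univ i), mul_left_comm] at hsing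
  exact not_isSingularPoint_binomPoly (ha i) (hb i) hmn hx hy (hsing.of_mul hi hrest)

theorem not_hasTorusSingularPoint_edgeForm_iff (hc : c ≠ 0)
    (hdist : ∀ i j, i ≠ j → a i * b j ≠ a j * b i) (hr : ∀ i, 0 < r i) :
    ¬HasTorusSingularPoint (edgeForm c u v a b m n r) ↔ ∀ i, r i = 1 := by
  refine ⟨fun h i => ?_, not_hasTorusSingularPoint_edgeForm hmn ha hb hc hdist⟩
  by_contra hne
  exact h (hasTorusSingularPoint_edgeForm_of_two_le hmn ha hb (i := i) (by have := hr i; omega))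

end EdgeForm

theorem Fintype.card_eq_sum_iff {ι : Type*} [Fintype ι] {r : ι → ℕ} (hr : ∀ i, 0 < r i) :
    Fintype.card ι = ∑ i, r i ↔ ∀ i, r i = 1 := by
  rw [Fintype.card_eq_sum_ones, Finset.sum_eq_sum_iff_of_le fun i _ => hr i]
  simp [eq_comm]
namespace MvPowerSeries

variable {σ R : Type*} [CommSemiring R] {w : σ → ℕ} {F : MvPowerSeries σ R} {p : ℕ}

theorem IsWeightedHomogeneous.weightedHomogeneousComponent_mul_of_lt
    (hF : F.IsWeightedHomogeneous w p) (G : MvPowerSeries σ R) {l : ℕ} (hl : l < p) :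
    weightedHomogeneousComponent w l (F * G) = 0 := by
  apply weightedHomogeneousComponent_of_lt_weightedOrder_eq_zero
  calc (l : ℕ∞) < p := by exact_mod_cast hl
    _ ≤ F.weightedOrder w := nat_le_weightedOrder w fun d hd => hF.coeff_eq_zero hd.ne
    _ ≤ F.weightedOrder w + G.weightedOrder w := le_self_add
    _ ≤ (F * G).weightedOrder w := le_weightedOrder_mul w

theorem IsWeightedHomogeneous.weightedHomogeneousComponent_mul
    (hF : F.IsWeightedHomogeneous w p) (G : MvPowerSeries σ R) (q : ℕ) :
    weightedHomogeneousComponent w (p + q) (F * G) = F * weightedHomogeneousComponent w q G := by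
  classical
  ext d
  rw [coeff_weightedHomogeneousComponent, coeff_mul, coeff_mul]
  split_ifs with hd
  · refine Finset.sum_congr rfl fun x hx => ?_
    by_cases hx1 : coeff x.1 F = 0
    · rw [hx1, zero_mul, zero_mul]
    rw [Finset.HasAntidiagonal.mem_antidiagonal] at hx
    rw [← hx, map_add, hF hx1, Nat.add_left_cancel_iff] at hd
    rw [coeff_weightedHomogeneousComponent, if_pos hd]
  · refine (Finset.sum_eq_zero fun x hx => ?_).symm
    by_cases hx1 : coeff x.1 F = 0
    · rw [hx1, zero_mul]
    rw [Finset.HasAntidiagonal.mem_antidiagonal] at hx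
    rw [coeff_weightedHomogeneousComponent, if_neg, mul_zero]
    rintro hx2
    exact hd (by rw [← hx, map_add, hF hx1, hx2])

theorem IsWeightedHomogeneous.exists_coe_eq [Finite σ] (hw : ∀ i, w i ≠ 0)
    (hF : F.IsWeightedHomogeneous w p) : ∃ P : MvPolynomial σ R, (P : MvPowerSeries σ R) = F := by
  classical
  refine ⟨truncFinset R (Finsupp.finite_of_nat_weight_le w hw p).toFinset F, ?_⟩
  ext d
  rw [MvPolynomial.coeff_coe, coeff_truncFinset]
  split_ifs with hd
  · rfl
  · refine (hF.coeff_eq_zero fun hdp => hd ?_).symm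
    simp [hdp]

theorem IsWeightedHomogeneous.exists_coe_mul_eq_of_dvd [Finite σ] (hw : ∀ i, w i ≠ 0)
    {Q : MvPolynomial σ R} (hQ : (Q : MvPowerSeries σ R).IsWeightedHomogeneous w p) {d : ℕ}
    (hF : F.IsWeightedHomogeneous w d) (hF0 : F ≠ 0) (hQF : (Q : MvPowerSeries σ R) ∣ F) :
    ∃ P : MvPolynomial σ R, F = ↑(Q * P) := by
  obtain ⟨G, rfl⟩ := hQF
  rw [isWeightedHomogeneous_iff_eq_weightedHomogeneousComponent] at hF
  rcases lt_or_ge d p with hdp | hpd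
  · exact absurd (hF.trans (hQ.weightedHomogeneousComponent_mul_of_lt G hdp)) hF0
  obtain ⟨q, rfl⟩ := Nat.exists_eq_add_of_le hpd
  obtain ⟨P, hP⟩ := IsWeightedHomogeneous.exists_coe_eq hw
    (isWeightedHomogeneous_weightedHomogeneousComponent w G q)
  exact ⟨P, by rw [hF, hQ.weightedHomogeneousComponent_mul, ← hP, MvPolynomial.coe_mul]⟩

end MvPowerSeries

theorem MvPolynomial.IsWeightedHomogeneous.coe {σ R : Type*} [CommSemiring R] {w : σ → ℕ}
    {P : MvPolynomial σ R} {p : ℕ} (h : P.IsWeightedHomogeneous w p) :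
    (P : MvPowerSeries σ R).IsWeightedHomogeneous w p :=
  fun hd => h (by rwa [MvPolynomial.coeff_coe] at hd)

theorem weight_fin_two (n m : ℕ) (α : Fin 2 →₀ ℕ) :
    Finsupp.weight ![n, m] α = n * α 0 + m * α 1 := by
  simp [Finsupp.weight_eq_sum, Fin.sum_univ_two, mul_comm]

theorem wtComp_eq_weightedHomogeneousComponent (n m l : ℕ) (f : PS K) :
    wtComp n m l f = weightedHomogeneousComponent ![n, m] l f := by
  ext α
  rw [MvPowerSeries.coeff_weightedHomogeneousComponent, weight_fin_two]
  rfl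

theorem isWeightedHomogeneous_wtComp (n m l : ℕ) (f : PS K) :
    (wtComp n m l f).IsWeightedHomogeneous ![n, m] l := by
  rw [wtComp_eq_weightedHomogeneousComponent]
  exact isWeightedHomogeneous_weightedHomogeneousComponent _ f l

theorem isWeightedHomogeneous_binomPoly (a b : K) (m n : ℕ) :
    (binomPoly a b m n).IsWeightedHomogeneous ![n, m] (n * m) := by
  rw [binomPoly, MvPolynomial.C_mul_X_pow_eq_monomial, MvPolynomial.C_mul_X_pow_eq_monomial]
  refine (MvPolynomial.isWeightedHomogeneous_monomial _ _ _ ?_).sub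
    (MvPolynomial.isWeightedHomogeneous_monomial _ _ _ ?_) <;>
  simp [weight_fin_two, mul_comm]

theorem convex_halfSpace_gt_union {E : Type*} [AddCommGroup E] [Module ℝ E] {φ : E → ℝ}
    (hφ : IsLinearMap ℝ φ) {d : ℝ} {H : Set E} (hHc : Convex ℝ H) (hH : H ⊆ {x | φ x = d}) :
    Convex ℝ ({x | d < φ x} ∪ H) := by
  have hle : ∀ x ∈ {x | d < φ x} ∪ H, d ≤ φ x := fun x hx =>
    hx.elim (fun h => le_of_lt h) fun h => (hH h).ge
  have hmemH : ∀ x ∈ {x | d < φ x} ∪ H, φ x = d → x ∈ H := fun x hx hxd =>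
    hx.resolve_left fun h => (ne_of_gt h) hxd
  intro x hx y hy a b ha hb hab
  by_cases hz : d < φ (a • x + b • y)
  · exact Or.inl hz
  have hxd := hle x hx
  have hyd := hle y hy
  have hsum : a * (φ x - d) + b * (φ y - d) ≤ 0 := by
    have : d * (a + b) = d := by rw [hab, mul_one]
    rw [hφ.map_add, hφ.map_smul, hφ.map_smul, smul_eq_mul, smul_eq_mul] at hz
    nlinarith [not_lt.1 hz]
  have hax : a * (φ x - d) = 0 := by
    nlinarith [mul_nonneg ha (sub_nonneg.2 hxd), mul_nonneg hb (sub_nonneg.2 hyd)]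
  have hby : b * (φ y - d) = 0 := by
    nlinarith [mul_nonneg ha (sub_nonneg.2 hxd), mul_nonneg hb (sub_nonneg.2 hyd)]
  right
  rcases mul_eq_zero.1 hax with rfl | hx'
  · obtain rfl : b = 1 := by linarith
    simpa using hmemH y hy (by linarith [(mul_eq_zero.1 hby).resolve_left one_ne_zero])
  rcases mul_eq_zero.1 hby with rfl | hy'
  · obtain rfl : a = 1 := by linarith
    simpa using hmemH x hx (sub_eq_zero.1 hx')
  exact hHc (hmemH x hx (sub_eq_zero.1 hx')) (hmemH y hy (sub_eq_zero.1 hy')) ha hb hab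

theorem convexHull_inter_hyperplane_subset {E : Type*} [AddCommGroup E] [Module ℝ E]
    {φ : E → ℝ} (hφ : IsLinearMap ℝ φ) {s : Set E} {d : ℝ} (hs : ∀ x ∈ s, d ≤ φ x) :
    convexHull ℝ s ∩ {x | φ x = d} ⊆ convexHull ℝ (s ∩ {x | φ x = d}) := by
  set H := convexHull ℝ (s ∩ {x | φ x = d})
  have hH : H ⊆ {x | φ x = d} := convexHull_min Set.inter_subset_right (convex_hyperplane hφ d)
  have hsC : s ⊆ {x | d < φ x} ∪ H := fun y hy =>
    (hs y hy).lt_or_eq.imp id fun h => subset_convexHull ℝ _ ⟨hy, h.symm⟩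
  rintro x ⟨hx, hxd⟩
  exact (convexHull_min hsC (convex_halfSpace_gt_union hφ (convex_convexHull ℝ _) hH) hx).resolve_left
    fun h => (ne_of_gt h) hxd

theorem isLinearMap_dotp (w : ℝ × ℝ) : IsLinearMap ℝ (dotp w) :=
  ⟨fun p q => by simp only [dotp, Prod.fst_add, Prod.snd_add]; ring,
    fun c p => by simp only [dotp, Prod.smul_fst, Prod.smul_snd, smul_eq_mul]; ring⟩

theorem dotp_rpt (n m : ℕ) (α : Fin 2 →₀ ℕ) :
    dotp ((n : ℝ), (m : ℝ)) (rpt α) = (Finsupp.weight ![n, m] α : ℝ) := by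
  simp [dotp, rpt, weight_fin_two]

theorem mem_segment_of_dotp_eq {w P Q R : ℝ × ℝ} {d : ℝ} (hw : 0 < w.2) (hP : dotp w P = d)
    (hQ : dotp w Q = d) (hR : dotp w R = d) (hPR : P.1 ≤ R.1) (hRQ : R.1 ≤ Q.1)
    (hPQ : P.1 < Q.1) : R ∈ segment ℝ P Q := by
  refine mem_segment_iff_div.2 ⟨Q.1 - R.1, R.1 - P.1, by linarith, by linarith, by linarith, ?_⟩
  simp only [dotp] at hP hQ hR
  have hPQ' : Q.1 - R.1 + (R.1 - P.1) ≠ 0 := by linarith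
  ext
  · simp only [Prod.fst_add, Prod.smul_fst, smul_eq_mul]
    field_simp
    ring
  · simp only [Prod.snd_add, Prod.smul_snd, smul_eq_mul]
    field_simp
    apply mul_left_cancel₀ hw.ne'
    linear_combination (Q.1 - R.1) * hP + (R.1 - P.1) * hQ - (Q.1 - P.1) * hR

def faceOf (f : PS K) (w : ℝ × ℝ) : Set (ℝ × ℝ) :=
  {q ∈ NewtonPolyhedron f | ∀ p ∈ NewtonPolyhedron f, dotp w q ≤ dotp w p}

section NewtonPolyhedron

variable {f : PS K} {w : ℝ × ℝ} {d : ℝ}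

theorem rpt_mem_newtonPolyhedron {α : Fin 2 →₀ ℕ} (h : MvPowerSeries.coeff α f ≠ 0) :
    rpt α ∈ NewtonPolyhedron f :=
  subset_convexHull ℝ _ (Set.mem_biUnion ⟨α, h, rfl⟩ ⟨le_rfl, le_rfl⟩)

variable (hw : 0 < w.1 ∧ 0 < w.2)
  (hlow : ∀ α, MvPowerSeries.coeff α f ≠ 0 → d ≤ dotp w (rpt α))
include hw hlow

theorem le_dotp_of_mem_newtonPolyhedron {q : ℝ × ℝ} (hq : q ∈ NewtonPolyhedron f) :
    d ≤ dotp w q := by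
  refine convexHull_min ?_ (convex_halfSpace_ge (isLinearMap_dotp w) d) hq
  simp only [Set.iUnion_subset_iff, suppR, Set.forall_mem_image]
  intro α hα q ⟨h1, h2⟩
  exact (hlow α hα).trans (by simp only [dotp]; nlinarith)

theorem newtonPolyhedron_inter_hyperplane_subset :
    NewtonPolyhedron f ∩ {q | dotp w q = d} ⊆
      convexHull ℝ (rpt '' {α | MvPowerSeries.coeff α f ≠ 0 ∧ dotp w (rpt α) = d}) := by
  refine (convexHull_inter_hyperplane_subset (isLinearMap_dotp w) fun q hq =>
    le_dotp_of_mem_newtonPolyhedron hw hlow (subset_convexHull ℝ _ hq)).trans (convexHull_mono ?_)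
  rintro q ⟨hq, hqd : dotp w q = d⟩
  simp only [Set.mem_iUnion, suppR, exists_prop, Set.mem_image] at hq
  obtain ⟨_, ⟨α, hα, rfl⟩, h1, h2⟩ := hq
  have hαd := hlow α hα
  simp only [dotp] at hqd hαd
  -- `q ≥ rpt α` coordinatewise and no lower on the line of weight `d`, so `q = rpt α`
  have e1 : (rpt α).1 = q.1 := by nlinarith
  have e2 : (rpt α).2 = q.2 := by nlinarith
  refine ⟨α, ⟨hα, ?_⟩, Prod.ext e1 e2⟩
  simp only [dotp]
  rw [e1, e2, hqd]

variable {α : Fin 2 →₀ ℕ} (hα : MvPowerSeries.coeff α f ≠ 0) (hαd : dotp w (rpt α) = d)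
include hα hαd

theorem faceOf_eq_inter : faceOf f w = NewtonPolyhedron f ∩ {q | dotp w q = d} := by
  ext q
  refine ⟨fun ⟨hq, hmin⟩ => ⟨hq, le_antisymm ?_ (le_dotp_of_mem_newtonPolyhedron hw hlow hq)⟩,
    fun ⟨hq, hqd⟩ => ⟨hq, fun p hp => ?_⟩⟩
  · exact hαd ▸ hmin _ (rpt_mem_newtonPolyhedron hα)
  · exact (hqd : dotp w q = d) ▸ le_dotp_of_mem_newtonPolyhedron hw hlow hp

theorem faceOf_eq_segment {β : Fin 2 →₀ ℕ} (hβ : MvPowerSeries.coeff β f ≠ 0)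
    (hβd : dotp w (rpt β) = d) (hαβ : α 0 < β 0)
    (hext : ∀ γ, MvPowerSeries.coeff γ f ≠ 0 → dotp w (rpt γ) = d → α 0 ≤ γ 0 ∧ γ 0 ≤ β 0) :
    faceOf f w = segment ℝ (rpt α) (rpt β) := by
  rw [faceOf_eq_inter hw hlow hα hαd]
  refine subset_antisymm ((newtonPolyhedron_inter_hyperplane_subset hw hlow).trans
    (convexHull_min ?_ (convex_segment _ _))) ?_
  · rintro _ ⟨γ, ⟨hγ, hγd⟩, rfl⟩
    have := hext γ hγ hγd
    exact mem_segment_of_dotp_eq hw.2 hαd hβd hγd (by simp [rpt, this.1]) (by simp [rpt, this.2])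
      (by simp [rpt, hαβ])
  · exact ((convex_convexHull ℝ _).inter (convex_hyperplane (isLinearMap_dotp w) d)).segment_subset
      ⟨rpt_mem_newtonPolyhedron hα, hαd⟩ ⟨rpt_mem_newtonPolyhedron hβ, hβd⟩

end NewtonPolyhedron

theorem coeff_inFace (f : PS K) (Δ : Set (ℝ × ℝ)) (α : Fin 2 →₀ ℕ) :
    MvPowerSeries.coeff α (inFace f Δ) = if rpt α ∈ Δ then MvPowerSeries.coeff α f else 0 :=
  rfl

theorem apply_zero_ne_of_weight_eq {n m : ℕ} (hm : 0 < m) {α β : Fin 2 →₀ ℕ}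
    (h : Finsupp.weight ![n, m] α = Finsupp.weight ![n, m] β) (hαβ : α ≠ β) : α 0 ≠ β 0 := by
  intro h0
  rw [weight_fin_two, weight_fin_two, h0, Nat.add_left_cancel_iff] at h
  exact hαβ (Finsupp.ext (Fin.forall_fin_two.2 ⟨h0, Nat.eq_of_mul_eq_mul_left hm h⟩))

section WeightedFace

variable {f : PS K} {n m d : ℕ}

theorem coeff_wtComp_ne_zero_iff {γ : Fin 2 →₀ ℕ} :
    MvPowerSeries.coeff γ (wtComp n m d f) ≠ 0 ↔
      MvPowerSeries.coeff γ f ≠ 0 ∧ dotp ((n : ℝ), (m : ℝ)) (rpt γ) = d := by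
  rw [wtComp_eq_weightedHomogeneousComponent, MvPowerSeries.coeff_weightedHomogeneousComponent,
    dotp_rpt, Nat.cast_inj]
  split_ifs with h <;> simp [h]

theorem le_dotp_of_wtComp_eq_zero (hlow : ∀ l < d, wtComp n m l f = 0) (α : Fin 2 →₀ ℕ)
    (h : MvPowerSeries.coeff α f ≠ 0) : (d : ℝ) ≤ dotp ((n : ℝ), (m : ℝ)) (rpt α) := by
  rw [dotp_rpt, Nat.cast_le]
  by_contra! hlt
  have := congrArg (MvPowerSeries.coeff α) (hlow _ hlt)
  rw [map_zero, ← not_ne_iff, coeff_wtComp_ne_zero_iff, dotp_rpt] at this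
  exact this ⟨h, rfl⟩

variable (hn : 0 < n) (hm : 0 < m) (hlow : ∀ l < d, wtComp n m l f = 0)
include hn hm hlow

theorem inFace_faceOf_eq_wtComp (hd : wtComp n m d f ≠ 0) :
    inFace f (faceOf f ((n : ℝ), (m : ℝ))) = wtComp n m d f := by
  have hw : (0 : ℝ) < n ∧ (0 : ℝ) < m := ⟨Nat.cast_pos.2 hn, Nat.cast_pos.2 hm⟩
  obtain ⟨α, hα⟩ := (MvPowerSeries.ne_zero_iff_exists_coeff_ne_zero _).1 hd
  rw [coeff_wtComp_ne_zero_iff] at hα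
  rw [faceOf_eq_inter hw (le_dotp_of_wtComp_eq_zero hlow) hα.1 hα.2]
  ext β
  rw [coeff_inFace, wtComp_eq_weightedHomogeneousComponent,
    MvPowerSeries.coeff_weightedHomogeneousComponent]
  by_cases hβ : MvPowerSeries.coeff β f = 0
  · simp [hβ]
  have : rpt β ∈ NewtonPolyhedron f ∩ {q | dotp ((n : ℝ), (m : ℝ)) q = d} ↔
      Finsupp.weight ![n, m] β = d := by
    rw [Set.mem_inter_iff, Set.mem_ofPred_eq, dotp_rpt, Nat.cast_inj]
    exact and_iff_right (rpt_mem_newtonPolyhedron hβ)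
  simp only [this]

theorem isEdge_faceOf {α β : Fin 2 →₀ ℕ} (hα : MvPowerSeries.coeff α (wtComp n m d f) ≠ 0)
    (hβ : MvPowerSeries.coeff β (wtComp n m d f) ≠ 0) (hαβ : α ≠ β) :
    IsEdge f (faceOf f ((n : ℝ), (m : ℝ))) := by
  have hw : (0 : ℝ) < n ∧ (0 : ℝ) < m := ⟨Nat.cast_pos.2 hn, Nat.cast_pos.2 hm⟩
  have hwt : (wtComp n m d f).IsWeightedHomogeneous ![n, m] d :=
    @isWeightedHomogeneous_wtComp _ _ n m d f
  set S := {γ | MvPowerSeries.coeff γ (wtComp n m d f) ≠ 0}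
  have hS : S.Finite := (Finsupp.finite_of_nat_weight_le ![n, m]
    (by simp [Fin.forall_fin_two, hn.ne', hm.ne']) d).subset fun γ hγ => (hwt hγ).le
  obtain ⟨γ₀, hγ₀, hmin⟩ := S.exists_min_image (· 0) hS ⟨α, hα⟩
  obtain ⟨γ₁, hγ₁, hmax⟩ := S.exists_max_image (· 0) hS ⟨α, hα⟩
  have hne : α 0 ≠ β 0 := apply_zero_ne_of_weight_eq hm ((hwt hα).trans (hwt hβ).symm) hαβ
  have hlt : γ₀ 0 < γ₁ 0 := by
    have := hmin α hα; have := hmin β hβ; have := hmax α hα; have := hmax β hβ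
    omega
  replace hγ₀ := coeff_wtComp_ne_zero_iff.1 hγ₀
  replace hγ₁ := coeff_wtComp_ne_zero_iff.1 hγ₁
  have hseg := faceOf_eq_segment hw (le_dotp_of_wtComp_eq_zero hlow) hγ₀.1 hγ₀.2 hγ₁.1 hγ₁.2 hlt
    fun γ hγ hγd => ⟨hmin γ (coeff_wtComp_ne_zero_iff.2 ⟨hγ, hγd⟩),
      hmax γ (coeff_wtComp_ne_zero_iff.2 ⟨hγ, hγd⟩)⟩
  refine ⟨⟨⟨rpt γ₀, hseg ▸ left_mem_segment ℝ _ _⟩, _, hw.1, hw.2, rfl⟩, rpt γ₀, rpt γ₁,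
    fun h => hlt.ne ?_, hseg⟩
  simpa [rpt] using congrArg Prod.fst h

end WeightedFace

theorem exists_wtComp_eq_binomPoly_sq_mul {f : PS K} {a b : K} {m n d : ℕ} (hm : 0 < m)
    (hn : 0 < n) (hd : wtComp n m d f ≠ 0) (hdvd : binomPS a b m n ^ 2 ∣ wtComp n m d f) :
    ∃ H : MvPolynomial (Fin 2) K,
      wtComp n m d f = ((binomPoly a b m n ^ 2 * H : MvPolynomial (Fin 2) K) : PS K) :=
  MvPowerSeries.IsWeightedHomogeneous.exists_coe_mul_eq_of_dvd
    (by simp [Fin.forall_fin_two, hn.ne', hm.ne'])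
    ((isWeightedHomogeneous_binomPoly a b m n).pow 2).coe (isWeightedHomogeneous_wtComp n m d f) hd
    (by rwa [MvPolynomial.coe_pow, coe_binomPoly])

theorem WNND.whnnd {f : PS K} (hf : WNND f) : WHNND f := by
  rintro ⟨a, b, m, n, d, ha, hb, hm, hn, hmn, hd, hlow, hdvd, -⟩
  obtain ⟨H, hH⟩ := exists_wtComp_eq_binomPoly_sq_mul hm hn hd hdvd
  obtain ⟨x, y, hx, hy, hsing⟩ :=
    hasTorusSingularPoint_of_binomPoly_sq_dvd ha hb hmn (dvd_mul_right _ H)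
  obtain ⟨α, hα, β, hβ, hαβ⟩ := MvPolynomial.exists_ne_mem_support_of_eval_eq_zero
    (by rintro h; rw [h, MvPolynomial.coe_zero] at hH; exact hd hH)
    (Fin.forall_fin_two.2 ⟨hx, hy⟩) hsing.1
  rw [MvPolynomial.mem_support_iff, ← MvPolynomial.coeff_coe, ← hH] at hα hβ
  refine hf _ (isEdge_faceOf hn hm hlow hα hβ hαβ) ?_
  rw [weaklyDegenerateAlong_iff ((inFace_faceOf_eq_wtComp hn hm hlow hd).trans hH)]
  exact ⟨x, y, hx, hy, hsing⟩

theorem stmt14_general (f : PS K) (Δ : Set (ℝ × ℝ))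
    (m0 n0 : ℕ) (hcop : Nat.Coprime m0 n0)
    (sc : ℕ) (a b : Fin sc → K) (r : Fin sc → ℕ)
    (ha : ∀ i, a i ≠ 0) (hb : ∀ i, b i ≠ 0) (hr : ∀ i, 0 < r i)
    (hdist : ∀ i j, i ≠ j → a i * b j ≠ a j * b i)
    (u v : ℕ) (c : K) (hc : c ≠ 0)
    (hfE : inFace f Δ = MvPowerSeries.C (σ := Fin 2) (R := K) c * (MvPowerSeries.X 0) ^ u *
      (MvPowerSeries.X 1) ^ v * ∏ i, binomPS (a i) (b i) m0 n0 ^ r i) :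
    (¬WeaklyDegenerateAlong f Δ ↔ ∀ i, r i = 1) ∧
    (¬WeaklyDegenerateAlong f Δ ↔ sc = ∑ i, r i) ∧
    (WNND f → WHNND f) := by
  have hnd : ¬WeaklyDegenerateAlong f Δ ↔ ∀ i, r i = 1 := by
    rw [weaklyDegenerateAlong_iff (hfE.trans coe_edgeForm.symm)]
    exact not_hasTorusSingularPoint_edgeForm_iff hcop ha hb hc hdist hr
  have hlen : sc = ∑ i, r i ↔ ∀ i, r i = 1 := by
    simpa using Fintype.card_eq_sum_iff hr
  exact ⟨hnd, hnd.trans hlen.symm, WNND.whnnd⟩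

/-- Proposition 3.7: writing `f_E = monomial · ∏ (a_i x^{m_0} - b_i y^{n_0})^{r_i}`, `f` is
weakly non-degenerate along the edge `E` iff all `r_i = 1`, equivalently iff
`s(f_E) = l(E) (= Σ r_i)`. In particular, WNND implies WHNND. -/
theorem stmt14 (f : PS K) (Δ : Set (ℝ × ℝ)) (hΔ : IsEdge f Δ)
    (m0 n0 : ℕ) (hm0 : 0 < m0) (hn0 : 0 < n0) (hcop : Nat.Coprime m0 n0)
    (sc : ℕ) (a b : Fin sc → K) (r : Fin sc → ℕ)
    (ha : ∀ i, a i ≠ 0) (hb : ∀ i, b i ≠ 0) (hr : ∀ i, 0 < r i)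
    (hdist : ∀ i j, i ≠ j → a i * b j ≠ a j * b i)
    (u v : ℕ) (c : K) (hc : c ≠ 0)
    (hfE : inFace f Δ = MvPowerSeries.C (σ := Fin 2) (R := K) c * (MvPowerSeries.X 0) ^ u *
      (MvPowerSeries.X 1) ^ v * ∏ i, binomPS (a i) (b i) m0 n0 ^ r i) :
    (¬WeaklyDegenerateAlong f Δ ↔ ∀ i, r i = 1) ∧
    (¬WeaklyDegenerateAlong f Δ ↔ sc = ∑ i, r i) ∧
    (WNND f → WHNND f) :=
  stmt14_general f Δ m0 n0 hcop sc a b r ha hb hr hdist u v c hc hfE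

end
end
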